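/- arXiv:0904.2060 — 2 statements merged into one kernel-verified Lean document; each statement's English description precedes it below -/
import Mathlib

section
/- In a K-dimensional C-WMMG, if players p_i and p_j satisfy p_i^k ≤ p_j^k for all 1 ≤ k ≤ K, then bz_i ≤ bz_j and ss_i ≤ ss_j. -/
/-- `q w C` is the competitive power of coalition `C` in a `K`-dimensional C-WMMG. -/
def q {P : Type*} [DecidableEq P] {K : ℕ} (w : P → Fin K → ℕ) (C : Finset P) : ℕ :=
  ∑ i, C.sup (fun j => w j i)

/-- A coalition is winning iff its power exceeds that of its complement. -/
def Winning {P : Type*} [Fintype P] [DecidableEq P] {K : ℕ}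
    (w : P → Fin K → ℕ) (C : Finset P) : Prop :=
  q w Cᶜ < q w C

open scoped Classical in
/-- `WC_j`: winning coalitions containing `p_j` such that `C ∖ {p_j}` is not winning. -/
noncomputable def wcsOf {P : Type*} [Fintype P] [DecidableEq P] {K : ℕ}
    (w : P → Fin K → ℕ) (j : P) : Finset (Finset P) :=
  Finset.univ.filter (fun C => Winning w C ∧ j ∈ C ∧ ¬ Winning w (C.erase j))

/-- The Banzhaf index `bz_j = |WC_j| / 2^{n-1}`. -/
noncomputable def bz {P : Type*} [Fintype P] [DecidableEq P] {K : ℕ}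
    (w : P → Fin K → ℕ) (j : P) : ℚ :=
  (wcsOf w j).card / 2 ^ (Fintype.card P - 1)

/-- The Shapley-Shubik index `ss_j = ∑_{C ∈ WC_j} (|C|-1)!(n-|C|)!/n!`. -/
noncomputable def ss {P : Type*} [Fintype P] [DecidableEq P] {K : ℕ}
    (w : P → Fin K → ℕ) (j : P) : ℚ :=
  ∑ C ∈ wcsOf w j,
    ((C.card - 1).factorial * (Fintype.card P - C.card).factorial : ℚ) /
      (Fintype.card P).factorial

lemma q_insert_le {P : Type*} [DecidableEq P] {K : ℕ} (w : P → Fin K → ℕ) {a b : P}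
    (h : ∀ k, w a k ≤ w b k) (D : Finset P) :
    q w (insert a D) ≤ q w (insert b D) := by
  apply Finset.sum_le_sum
  intro k _
  simp only [Finset.sup_insert]
  exact sup_le_sup_right (h k) _

/-- Local monotonicity of the Banzhaf and Shapley-Shubik indices in K-dim C-WMMGs:
if `p_i^k ≤ p_j^k` for all `k`, then `bz_i ≤ bz_j` and `ss_i ≤ ss_j`. -/
theorem bz_ss_local_monotone {P : Type*} [Fintype P] [DecidableEq P] {K : ℕ}
    (w : P → Fin K → ℕ) (i j : P) (h : ∀ k : Fin K, w i k ≤ w j k) :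
    bz w i ≤ bz w j ∧ ss w i ≤ ss w j := by
  classical
  by_cases hij : i = j
  · subst hij; exact ⟨le_refl _, le_refl _⟩
  set φ : Finset P → Finset P := fun C => if j ∈ C then C else insert j (C.erase i) with hφ
  have key1 : ∀ C : Finset P, j ∈ C → φ C = C := fun C hC => if_pos hC
  have key2 : ∀ C : Finset P, j ∉ C → φ C = insert j (C.erase i) := fun C hC => if_neg hC
  have hmem : ∀ C ∈ wcsOf w i, φ C ∈ wcsOf w j := by
    intro C hC
    simp only [wcsOf, Finset.mem_filter, Finset.mem_univ, true_and] at hC ⊢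
    obtain ⟨hW, hiC, hNW⟩ := hC
    by_cases hjC : j ∈ C
    · rw [key1 C hjC]
      refine ⟨hW, hjC, ?_⟩
      have hiC' : i ∈ C.erase j := Finset.mem_erase.mpr ⟨hij, hiC⟩
      have hjC' : j ∈ C.erase i := Finset.mem_erase.mpr ⟨fun hh => hij hh.symm, hjC⟩
      have e1 : C.erase j = insert i ((C.erase j).erase i) := (Finset.insert_erase hiC').symm
      have e2 : C.erase i = insert j ((C.erase j).erase i) := by
        rw [Finset.erase_right_comm]; exact (Finset.insert_erase hjC').symm
      have h1 : q w (C.erase j) ≤ q w (C.erase i) := by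
        rw [e1, e2]; exact q_insert_le w h _
      have h2 : q w (C.erase i) ≤ q w (C.erase i)ᶜ := not_lt.mp hNW
      have h3 : q w (C.erase i)ᶜ ≤ q w (C.erase j)ᶜ := by
        rw [Finset.compl_erase, Finset.compl_erase]; exact q_insert_le w h _
      exact not_lt.mpr (h1.trans (h2.trans h3))
    · rw [key2 C hjC]
      have hjCe : j ∉ C.erase i := fun hh => hjC (Finset.mem_of_mem_erase hh)
      refine ⟨?_, Finset.mem_insert_self _ _, ?_⟩
      · have hc : (insert j (C.erase i))ᶜ = insert i (Cᶜ.erase j) := by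
          rw [Finset.compl_insert, Finset.compl_erase, Finset.erase_insert_of_ne hij]
        have hup : q w C ≤ q w (insert j (C.erase i)) := by
          conv_lhs => rw [← Finset.insert_erase hiC]
          exact q_insert_le w h _
        have hjcomp : j ∈ Cᶜ := Finset.mem_compl.mpr hjC
        have hdown : q w (insert j (C.erase i))ᶜ ≤ q w Cᶜ := by
          rw [hc]
          conv_rhs => rw [← Finset.insert_erase hjcomp]
          exact q_insert_le w h _
        exact lt_of_le_of_lt hdown (lt_of_lt_of_le hW hup)
      · rw [Finset.erase_insert hjCe]; exact hNW
  have hcard : ∀ C ∈ wcsOf w i, (φ C).card = C.card := by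
    intro C hC
    simp only [wcsOf, Finset.mem_filter, Finset.mem_univ, true_and] at hC
    obtain ⟨_, hiC, _⟩ := hC
    by_cases hjC : j ∈ C
    · rw [key1 C hjC]
    · have hjCe : j ∉ C.erase i := fun hh => hjC (Finset.mem_of_mem_erase hh)
      rw [key2 C hjC, Finset.card_insert_of_notMem hjCe, Finset.card_erase_of_mem hiC,
        Nat.sub_add_cancel (Finset.card_pos.mpr ⟨i, hiC⟩)]
  have hinj : ∀ C₁ ∈ wcsOf w i, ∀ C₂ ∈ wcsOf w i, φ C₁ = φ C₂ → C₁ = C₂ := by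
    intro C₁ h₁ C₂ h₂ he
    simp only [wcsOf, Finset.mem_filter, Finset.mem_univ, true_and] at h₁ h₂
    have hi₁ : i ∈ C₁ := h₁.2.1
    have hi₂ : i ∈ C₂ := h₂.2.1
    have hnotmem : ∀ C : Finset P, i ∉ insert j (C.erase i) := by
      intro C hh
      rcases Finset.mem_insert.mp hh with hh | hh
      · exact hij hh
      · exact (Finset.mem_erase.mp hh).1 rfl
    by_cases hj₁ : j ∈ C₁ <;> by_cases hj₂ : j ∈ C₂
    · rw [key1 C₁ hj₁, key1 C₂ hj₂] at he; exact he
    · rw [key1 C₁ hj₁, key2 C₂ hj₂] at he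
      exact absurd (he ▸ hi₁) (hnotmem C₂)
    · rw [key2 C₁ hj₁, key1 C₂ hj₂] at he
      exact absurd (he.symm ▸ hi₂) (hnotmem C₁)
    · rw [key2 C₁ hj₁, key2 C₂ hj₂] at he
      have hje₁ : j ∉ C₁.erase i := fun hh => hj₁ (Finset.mem_of_mem_erase hh)
      have hje₂ : j ∉ C₂.erase i := fun hh => hj₂ (Finset.mem_of_mem_erase hh)
      have he' : C₁.erase i = C₂.erase i := by
        have := congrArg (fun S => Finset.erase S j) he
        simpa [Finset.erase_insert hje₁, Finset.erase_insert hje₂] using this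
      have := congrArg (insert i) he'
      rwa [Finset.insert_erase hi₁, Finset.insert_erase hi₂] at this
  constructor
  · unfold bz
    have hle : (wcsOf w i).card ≤ (wcsOf w j).card :=
      Finset.card_le_card_of_injOn φ hmem hinj
    have hle' : ((wcsOf w i).card : ℚ) ≤ ((wcsOf w j).card : ℚ) := by exact_mod_cast hle
    gcongr
  · unfold ss
    have himg : (wcsOf w i).image φ ⊆ wcsOf w j := Finset.image_subset_iff.mpr hmem
    calc ∑ C ∈ wcsOf w i,
          ((C.card - 1).factorial * (Fintype.card P - C.card).factorial : ℚ) /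
            (Fintype.card P).factorial
        = ∑ C ∈ (wcsOf w i).image φ,
          ((C.card - 1).factorial * (Fintype.card P - C.card).factorial : ℚ) /
            (Fintype.card P).factorial := by
          rw [Finset.sum_image hinj]
          exact Finset.sum_congr rfl fun C hC => by rw [hcard C hC]
      _ ≤ ∑ C ∈ wcsOf w j,
          ((C.card - 1).factorial * (Fintype.card P - C.card).factorial : ℚ) /
            (Fintype.card P).factorial := by
          apply Finset.sum_le_sum_of_subset_of_nonneg himg
          intro C _ _
          positivity
end

section
/- A partition π* of N is C-stable if and only if π* contains a minimal winning coalition C* whose total power is smallest among all minimal winning coalitions, i.e., θ(C*) = min{θ(C) : C a minimal winning coalition}. -/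
open Classical

/-- A minimal winning coalition: winning, and every proper subset is losing. -/
def MWC {P : Type*} [Fintype P] [DecidableEq P] {K : ℕ}
    (w : P → Fin K → ℕ) (C : Finset P) : Prop :=
  Winning w C ∧ ∀ D ⊂ C, ¬ Winning w D

/-- `π` is a partition of `S` into nonempty coalitions. -/
def IsPartition {P : Type*} [DecidableEq P] (π : Finset (Finset P)) (S : Finset P) : Prop :=
  (∀ C ∈ π, C.Nonempty) ∧ (∀ C ∈ π, C ⊆ S) ∧ (∀ x ∈ S, ∃! C, C ∈ π ∧ x ∈ C)

/-- The payoff `φ(p_j, π)`: if `π` has a (unique) winner `C*`, i.e. a member whose power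
strictly exceeds that of every other member, then a member `p_j` of `C*` receives
`θ_j / θ(C*)`; all other players receive `0`. -/
noncomputable def payoff {P : Type*} [Fintype P] [DecidableEq P] {K : ℕ}
    (w : P → Fin K → ℕ) (θ : P → ℝ) (j : P) (π : Finset (Finset P)) : ℝ :=
  if h : ∃ C, C ∈ π ∧ j ∈ C ∧ ∀ D ∈ π, D ≠ C → q w D < q w C
  then θ j / ∑ k ∈ h.choose, θ k
  else 0

/-- C-stability of a partition `π₁` of `S` with respect to a partition `π₂` of `N ∖ S`,
defined by recursion on `|S|`.  If `|S| ≤ 1`, then `π₁` is C-stable w.r.t. `π₂`.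
If `|S| ≥ 2`, then `π₁` is C-stable w.r.t. `π₂` iff there is no nonempty `C ⊆ S` such
that every `p_j ∈ C` gets a strictly larger payoff in `{C} ∪ π₁' ∪ π₂` than in `π₁ ∪ π₂`
for every `π₁' ∈ Π₁|(π₂ ∪ {C})`, where `Π₁|(π₂ ∪ {C})` is the set of partitions of
`S ∖ C` that are C-stable w.r.t. `π₂ ∪ {C}` if this set is nonempty, and the set of all
partitions of `S ∖ C` otherwise. -/
noncomputable def CStableRel {P : Type*} [Fintype P] [DecidableEq P] {K : ℕ}
    (w : P → Fin K → ℕ) (θ : P → ℝ)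
    (S : Finset P) (π₁ π₂ : Finset (Finset P)) : Prop :=
  if S.card ≤ 1 then True
  else
    ¬ ∃ C : Finset P, ∃ h : C ⊆ S ∧ C.Nonempty,
      ∀ j ∈ C,
        ∀ π' ∈ (if ∃ π : Finset (Finset P),
                    IsPartition π (S \ C) ∧ CStableRel w θ (S \ C) π (insert C π₂)
                then {π : Finset (Finset P) |
                    IsPartition π (S \ C) ∧ CStableRel w θ (S \ C) π (insert C π₂)}
                else {π : Finset (Finset P) | IsPartition π (S \ C)}),
          payoff w θ j (insert C (π' ∪ π₂)) > payoff w θ j (π₁ ∪ π₂)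
termination_by S.card
decreasing_by
  all_goals exact Finset.card_lt_card (Finset.sdiff_ssubset h.1 h.2)

/-- A partition `π` of `N` is C-stable iff (i) it contains a winning coalition, and
(ii) no nonempty coalition `C ⊆ N` blocks it: there is no nonempty `C` such that every
`p_j ∈ C` gets a strictly larger payoff in `{C} ∪ π₁'` than in `π` for every
`π₁' ∈ Π₁|{C}`, where `Π₁|{C}` is the set of partitions of `N ∖ C` that are C-stable
w.r.t. `{C}` if this set is nonempty, and the set of all partitions of `N ∖ C` otherwise. -/
noncomputable def CStable {P : Type*} [Fintype P] [DecidableEq P] {K : ℕ}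
    (w : P → Fin K → ℕ) (θ : P → ℝ) (π : Finset (Finset P)) : Prop :=
  (∃ C ∈ π, Winning w C) ∧
  ¬ ∃ C : Finset P, C.Nonempty ∧
      ∀ j ∈ C,
        ∀ π' ∈ (if ∃ π₁ : Finset (Finset P),
                    IsPartition π₁ (Finset.univ \ C) ∧
                      CStableRel w θ (Finset.univ \ C) π₁ {C}
                then {π₁ : Finset (Finset P) |
                    IsPartition π₁ (Finset.univ \ C) ∧
                      CStableRel w θ (Finset.univ \ C) π₁ {C}}
                else {π₁ : Finset (Finset P) | IsPartition π₁ (Finset.univ \ C)}),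
          payoff w θ j (insert C π') > payoff w θ j π

set_option linter.unusedSectionVars false

section Helpers

variable {P : Type*} [Fintype P] [DecidableEq P] {K : ℕ}

lemma q_mono (w : P → Fin K → ℕ) {C D : Finset P} (h : C ⊆ D) : q w C ≤ q w D :=
  Finset.sum_le_sum fun _ _ => Finset.sup_mono h

lemma q_empty (w : P → Fin K → ℕ) : q w (∅ : Finset P) = 0 := by simp [q]

lemma winning_nonempty {w : P → Fin K → ℕ} {C : Finset P} (h : Winning w C) : C.Nonempty := by
  by_contra hne
  rw [Finset.not_nonempty_iff_eq_empty] at hne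
  subst hne
  rw [Winning, q_empty] at h
  exact Nat.not_lt_zero _ h

lemma exists_mwc_subset {w : P → Fin K → ℕ} :
    ∀ C : Finset P, Winning w C → ∃ D ⊆ C, MWC w D := by
  intro C
  induction C using Finset.strongInduction with
  | _ C ih =>
    intro hC
    by_cases h : ∀ D ⊂ C, ¬ Winning w D
    · exact ⟨C, subset_rfl, hC, h⟩
    · push_neg at h
      obtain ⟨D, hD, hDw⟩ := h
      obtain ⟨E, hE, hEM⟩ := ih D hD hDw
      exact ⟨E, hE.trans hD.subset, hEM⟩

lemma winner_unique (w : P → Fin K → ℕ) {π : Finset (Finset P)} {C₁ C₂ : Finset P}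
    (h₁ : C₁ ∈ π) (h₂ : C₂ ∈ π)
    (p₁ : ∀ D ∈ π, D ≠ C₁ → q w D < q w C₁)
    (p₂ : ∀ D ∈ π, D ≠ C₂ → q w D < q w C₂) : C₁ = C₂ := by
  by_contra hne
  have a := p₁ C₂ h₂ (fun he => hne he.symm)
  have b := p₂ C₁ h₁ hne
  omega

lemma payoff_eq_of_winner (w : P → Fin K → ℕ) (θ : P → ℝ) {π : Finset (Finset P)}
    {Cw : Finset P} (hmem : Cw ∈ π) (hw : ∀ D ∈ π, D ≠ Cw → q w D < q w Cw) (j : P) :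
    payoff w θ j π = if j ∈ Cw then θ j / ∑ k ∈ Cw, θ k else 0 := by
  unfold payoff
  by_cases hj : j ∈ Cw
  · have hEx : ∃ C, C ∈ π ∧ j ∈ C ∧ ∀ D ∈ π, D ≠ C → q w D < q w C := ⟨Cw, hmem, hj, hw⟩
    rw [dif_pos hEx, if_pos hj]
    obtain ⟨h1, _, h3⟩ := hEx.choose_spec
    rw [winner_unique w h1 hmem h3 hw]
  · rw [if_neg hj, dif_neg]
    rintro ⟨C, hCπ, hjC, hCw⟩
    exact hj (winner_unique w hCπ hmem hCw hw ▸ hjC)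

lemma payoff_nonneg (w : P → Fin K → ℕ) {θ : P → ℝ} (hθ : ∀ j, 0 < θ j)
    (j : P) (π : Finset (Finset P)) : 0 ≤ payoff w θ j π := by
  unfold payoff
  split
  · exact div_nonneg (hθ j).le (Finset.sum_nonneg fun i _ => (hθ i).le)
  · exact le_refl 0

lemma winner_of_payoff_pos {w : P → Fin K → ℕ} {θ : P → ℝ} {j : P} {π : Finset (Finset P)}
    (h : 0 < payoff w θ j π) :
    ∃ Cw, Cw ∈ π ∧ j ∈ Cw ∧ ∀ D ∈ π, D ≠ Cw → q w D < q w Cw := by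
  unfold payoff at h
  by_cases hEx : ∃ C, C ∈ π ∧ j ∈ C ∧ ∀ D ∈ π, D ≠ C → q w D < q w C
  · exact hEx
  · rw [dif_neg hEx] at h; exact absurd h (lt_irrefl 0)

lemma exists_partition (T : Finset P) : ∃ ρ : Finset (Finset P), IsPartition ρ T := by
  refine ⟨T.image fun x => {x}, ?_, ?_, ?_⟩
  · intro C hC
    obtain ⟨x, _, rfl⟩ := Finset.mem_image.mp hC
    exact ⟨x, Finset.mem_singleton_self x⟩
  · intro C hC
    obtain ⟨x, hx, rfl⟩ := Finset.mem_image.mp hC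
    exact Finset.singleton_subset_iff.mpr hx
  · intro x hx
    refine ⟨{x}, ⟨Finset.mem_image_of_mem _ hx, Finset.mem_singleton_self x⟩, ?_⟩
    rintro C ⟨hC, hxC⟩
    obtain ⟨y, _, rfl⟩ := Finset.mem_image.mp hC
    rw [Finset.mem_singleton.mp hxC]

lemma partition_empty_eq {ρ : Finset (Finset P)} (h : IsPartition ρ (∅ : Finset P)) :
    ρ = ∅ := by
  rw [Finset.eq_empty_iff_forall_notMem]
  intro D hD
  obtain ⟨x, hx⟩ := h.1 D hD
  exact absurd (h.2.1 D hD hx) (Finset.notMem_empty x)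

lemma isPartition_singleton {T : Finset P} (hT : T.Nonempty) :
    IsPartition ({T} : Finset (Finset P)) T := by
  refine ⟨?_, ?_, ?_⟩
  · intro C hC; rw [Finset.mem_singleton.mp hC]; exact hT
  · intro C hC; rw [Finset.mem_singleton.mp hC]
  · intro x hx
    exact ⟨T, ⟨Finset.mem_singleton_self T, hx⟩, fun C hC => Finset.mem_singleton.mp hC.1⟩

lemma mem_iteSet_isPartition {T : Finset P} {R : Finset (Finset P) → Prop}
    {π' : Finset (Finset P)}
    (h : π' ∈ (if ∃ ρ : Finset (Finset P), IsPartition ρ T ∧ R ρ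
        then {ρ : Finset (Finset P) | IsPartition ρ T ∧ R ρ}
        else {ρ : Finset (Finset P) | IsPartition ρ T})) : IsPartition π' T := by
  by_cases hc : ∃ ρ : Finset (Finset P), IsPartition ρ T ∧ R ρ
  · rw [if_pos hc] at h; exact h.1
  · rw [if_neg hc] at h; exact h

lemma iteSet_nonempty (T : Finset P) (R : Finset (Finset P) → Prop) :
    ∃ π', π' ∈ (if ∃ ρ : Finset (Finset P), IsPartition ρ T ∧ R ρ
        then {ρ : Finset (Finset P) | IsPartition ρ T ∧ R ρ}
        else {ρ : Finset (Finset P) | IsPartition ρ T}) := by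
  by_cases hc : ∃ ρ : Finset (Finset P), IsPartition ρ T ∧ R ρ
  · obtain ⟨ρ, hρ⟩ := hc
    exact ⟨ρ, by rw [if_pos ⟨ρ, hρ⟩]; exact hρ⟩
  · obtain ⟨ρ, hρ⟩ := exists_partition T
    exact ⟨ρ, by rw [if_neg hc]; exact hρ⟩

lemma mem_iteSet_of {T : Finset P} {R : Finset (Finset P) → Prop} {ρ₀ : Finset (Finset P)}
    (h1 : IsPartition ρ₀ T) (h2 : R ρ₀) :
    ρ₀ ∈ (if ∃ ρ : Finset (Finset P), IsPartition ρ T ∧ R ρ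
        then {ρ : Finset (Finset P) | IsPartition ρ T ∧ R ρ}
        else {ρ : Finset (Finset P) | IsPartition ρ T}) := by
  rw [if_pos ⟨ρ₀, h1, h2⟩]; exact Set.mem_setOf_eq ▸ ⟨h1, h2⟩

lemma part_subset_compl {π : Finset (Finset P)} (hπ : IsPartition π Finset.univ)
    {Cs D : Finset P} (hCs : Cs ∈ π) (hD : D ∈ π) (hne : D ≠ Cs) : D ⊆ Csᶜ := by
  intro x hx
  rw [Finset.mem_compl]
  intro hxCs
  obtain ⟨E, _, hEu⟩ := hπ.2.2 x (Finset.mem_univ x)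
  exact hne ((hEu D ⟨hD, hx⟩).trans (hEu Cs ⟨hCs, hxCs⟩).symm)

lemma sum_lt_of_ssubset {θ : P → ℝ} (hθ : ∀ j, 0 < θ j) {D W : Finset P} (h : D ⊂ W) :
    ∑ j ∈ D, θ j < ∑ j ∈ W, θ j := by
  obtain ⟨x, hxW, hxD⟩ := Finset.exists_of_ssubset h
  exact Finset.sum_lt_sum_of_subset h.subset hxW hxD (hθ x) (fun j _ _ => (hθ j).le)

lemma union_singleton_eq_insert (π' : Finset (Finset P)) (C : Finset P) :
    π' ∪ {C} = insert C π' := by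
  rw [Finset.union_comm]
  exact (Finset.insert_eq C π').symm

/-- Key auxiliary lemma: if `C` is nonempty with `q(C) ≤ q(N∖C)`, where `N∖C` is nonempty,
then `C` cannot be the winner of `insert C π'` for every `π'` in the (stable-or-all)
set of partitions of `N∖C`. -/
lemma no_always_winner (w : P → Fin K → ℕ) {θ : P → ℝ} (hθ : ∀ j, 0 < θ j)
    {C : Finset P} (hCne : C.Nonempty) (hS : (Finset.univ \ C : Finset P).Nonempty)
    (hq : q w C ≤ q w (Finset.univ \ C))
    (hwin : ∀ π' ∈ (if ∃ π₁ : Finset (Finset P),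
                    IsPartition π₁ (Finset.univ \ C) ∧
                      CStableRel w θ (Finset.univ \ C) π₁ {C}
                then {π₁ : Finset (Finset P) |
                    IsPartition π₁ (Finset.univ \ C) ∧
                      CStableRel w θ (Finset.univ \ C) π₁ {C}}
                else {π₁ : Finset (Finset P) | IsPartition π₁ (Finset.univ \ C)}),
        ∀ D ∈ insert C π', D ≠ C → q w D < q w C) : False := by
  set S : Finset P := Finset.univ \ C with hSdef
  have hSneC : S ≠ C := by
    obtain ⟨x, hx⟩ := hS
    intro he
    exact (Finset.mem_sdiff.mp hx).2 (he ▸ hx)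
  -- if {S} belongs to the set, we get a contradiction
  have key : ∀ hmem : ({S} : Finset (Finset P)) ∈ (if ∃ π₁ : Finset (Finset P),
                    IsPartition π₁ S ∧ CStableRel w θ S π₁ {C}
                then {π₁ : Finset (Finset P) |
                    IsPartition π₁ S ∧ CStableRel w θ S π₁ {C}}
                else {π₁ : Finset (Finset P) | IsPartition π₁ S}), False := by
    intro hmem
    have := hwin {S} hmem S (Finset.mem_insert_of_mem (Finset.mem_singleton_self S)) hSneC
    omega
  by_cases hc : ∃ π₁ : Finset (Finset P), IsPartition π₁ S ∧ CStableRel w θ S π₁ {C}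
  · by_cases hcard : S.card ≤ 1
    · exact key (mem_iteSet_of (isPartition_singleton hS)
        (by rw [CStableRel, if_pos hcard]; trivial))
    · by_cases hlt : q w C < q w S
      · -- any stable partition is blocked by the whole of S
        obtain ⟨π', hp', hst⟩ := hc
        have hCw := hwin π' (mem_iteSet_of hp' hst)
        rw [CStableRel, if_neg hcard] at hst
        apply hst
        refine ⟨S, ⟨subset_rfl, hS⟩, ?_⟩
        intro j hj π'' hπ''
        have hp'' : IsPartition π'' (S \ S) := mem_iteSet_isPartition hπ''
        rw [Finset.sdiff_self] at hp''
        rw [partition_empty_eq hp'', Finset.empty_union]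
        have hwS : ∀ D ∈ insert S ({C} : Finset (Finset P)), D ≠ S → q w D < q w S := by
          intro D hD hne
          rcases Finset.mem_insert.mp hD with rfl | hD'
          · exact absurd rfl hne
          · rw [Finset.mem_singleton.mp hD']; exact hlt
        rw [payoff_eq_of_winner w θ (Finset.mem_insert_self S {C}) hwS j, if_pos hj]
        rw [union_singleton_eq_insert π' C,
          payoff_eq_of_winner w θ (Finset.mem_insert_self C π') hCw j,
          if_neg (Finset.mem_sdiff.mp hj).2]
        exact div_pos (hθ j) (Finset.sum_pos (fun i _ => hθ i) hS)
      · -- q C = q S : the partition {S} itself is stable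
        have hqe : q w C = q w S := le_antisymm hq (not_lt.mp hlt)
        have hstS : CStableRel w θ S {S} {C} := by
          rw [CStableRel, if_neg hcard]
          rintro ⟨C', ⟨hsub, hne'⟩, hblk⟩
          obtain ⟨j, hj⟩ := hne'
          obtain ⟨π'', hπ''⟩ := iteSet_nonempty (S \ C')
            (fun ρ => CStableRel w θ (S \ C') ρ (insert C' {C}))
          have hgt := hblk j hj π'' hπ''
          have hp'' := mem_iteSet_isPartition hπ''
          have h0 : payoff w θ j (insert C' (π'' ∪ {C})) = 0 := by
            by_contra h0
            have hpos : 0 < payoff w θ j (insert C' (π'' ∪ {C})) :=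
              lt_of_le_of_ne (payoff_nonneg w hθ _ _) (Ne.symm h0)
            obtain ⟨Cw, hCwmem, hjCw, hCwprop⟩ := winner_of_payoff_pos hpos
            have hjS : j ∈ S := hsub hj
            have hjnC : j ∉ C := (Finset.mem_sdiff.mp hjS).2
            have hCC' : Cw = C' := by
              rcases Finset.mem_insert.mp hCwmem with h1 | h1
              · exact h1
              · rcases Finset.mem_union.mp h1 with h2 | h2
                · exact absurd ((Finset.mem_sdiff.mp (hp''.2.1 Cw h2 hjCw)).2) (fun hh => hh hj)
                · rw [Finset.mem_singleton.mp h2] at hjCw; exact absurd hjCw hjnC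
            subst hCC'
            have hCneCw : C ≠ Cw := by
              intro he
              obtain ⟨x, hx⟩ := hCne
              exact (Finset.mem_sdiff.mp (hsub (he ▸ hx : x ∈ Cw))).2 hx
            have hq2 := hCwprop C (Finset.mem_insert_of_mem
              (Finset.mem_union_right _ (Finset.mem_singleton_self C))) hCneCw
            have hle : q w Cw ≤ q w S := q_mono w hsub
            omega
          have hnn := payoff_nonneg w hθ j (({S} : Finset (Finset P)) ∪ {C})
          rw [h0] at hgt
          linarith
        exact key (mem_iteSet_of (isPartition_singleton hS) hstS)
  · exact key (by rw [if_neg hc]; exact isPartition_singleton hS)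

end Helpers

/-- A partition `π` of `N` is C-stable iff it contains a minimal winning coalition whose
total power `θ(C*) = ∑_{p_j ∈ C*} θ_j` is smallest among all minimal winning coalitions. -/
theorem cstable_iff_contains_min_power_mwc {P : Type*} [Fintype P] [DecidableEq P] {K : ℕ}
    (w : P → Fin K → ℕ) (θ : P → ℝ) (hθ : ∀ j, 0 < θ j)
    (π : Finset (Finset P)) (hπ : IsPartition π Finset.univ) :
    CStable w θ π ↔
      ∃ Cs ∈ π, MWC w Cs ∧ ∀ C : Finset P, MWC w C → ∑ j ∈ Cs, θ j ≤ ∑ j ∈ C, θ j := by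
  constructor
  · rintro ⟨⟨W, hWπ, hWwin⟩, hnb⟩
    by_contra hno
    push_neg at hno
    obtain ⟨D₀, hD₀W, hD₀M⟩ := exists_mwc_subset W hWwin
    have hFne : (Finset.univ.filter (fun C : Finset P => MWC w C)).Nonempty :=
      ⟨D₀, Finset.mem_filter.mpr ⟨Finset.mem_univ _, hD₀M⟩⟩
    obtain ⟨Cs, hCsF, hCsmin⟩ := Finset.exists_min_image _ (fun C => ∑ j ∈ C, θ j) hFne
    have hCsM : MWC w Cs := (Finset.mem_filter.mp hCsF).2
    have hmin : ∀ C : Finset P, MWC w C → ∑ j ∈ Cs, θ j ≤ ∑ j ∈ C, θ j :=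
      fun C hC => hCsmin C (Finset.mem_filter.mpr ⟨Finset.mem_univ _, hC⟩)
    have hkey : ∑ j ∈ Cs, θ j < ∑ j ∈ W, θ j := by
      by_contra hle
      push_neg at hle
      have h1 : ∑ j ∈ D₀, θ j ≤ ∑ j ∈ W, θ j :=
        Finset.sum_le_sum_of_subset_of_nonneg hD₀W (fun i _ _ => (hθ i).le)
      have h2 := hmin D₀ hD₀M
      have hDW : D₀ = W := by
        by_contra hne
        exact absurd (sum_lt_of_ssubset hθ (lt_of_le_of_ne hD₀W hne)) (by linarith)
      subst hDW
      obtain ⟨C', hC'M, hC'lt⟩ := hno D₀ hWπ hD₀M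
      have := hmin C' hC'M
      linarith
    have hWprop : ∀ D ∈ π, D ≠ W → q w D < q w W := fun D hD hne =>
      lt_of_le_of_lt (q_mono w (part_subset_compl hπ hWπ hD hne)) hWwin
    apply hnb
    refine ⟨Cs, winning_nonempty hCsM.1, ?_⟩
    intro j hj π' hπ'
    have hπ'p : IsPartition π' (Finset.univ \ Cs) := mem_iteSet_isPartition hπ'
    have hCsWin : q w Csᶜ < q w Cs := hCsM.1
    have hLw : ∀ D ∈ insert Cs π', D ≠ Cs → q w D < q w Cs := by
      intro D hD hne
      rcases Finset.mem_insert.mp hD with h1 | h1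
      · exact absurd h1 hne
      · have hsub : D ⊆ Csᶜ := by
          rw [Finset.compl_eq_univ_sdiff]; exact hπ'p.2.1 D h1
        exact lt_of_le_of_lt (q_mono w hsub) hCsWin
    rw [payoff_eq_of_winner w θ (Finset.mem_insert_self Cs π') hLw j, if_pos hj,
        payoff_eq_of_winner w θ hWπ hWprop j]
    have hCspos : 0 < ∑ k ∈ Cs, θ k :=
      Finset.sum_pos (fun i _ => hθ i) (winning_nonempty hCsM.1)
    by_cases hjW : j ∈ W
    · rw [if_pos hjW]
      exact div_lt_div_of_pos_left (hθ j) hCspos hkey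
    · rw [if_neg hjW]
      exact div_pos (hθ j) hCspos
  · rintro ⟨Cs, hCsπ, hCsM, hCsmin⟩
    refine ⟨⟨Cs, hCsπ, hCsM.1⟩, ?_⟩
    rintro ⟨C, hCne, hblk⟩
    obtain ⟨j₀, hj₀⟩ := hCne
    have hwin : ∀ π' ∈ (if ∃ π₁ : Finset (Finset P),
                    IsPartition π₁ (Finset.univ \ C) ∧
                      CStableRel w θ (Finset.univ \ C) π₁ {C}
                then {π₁ : Finset (Finset P) |
                    IsPartition π₁ (Finset.univ \ C) ∧
                      CStableRel w θ (Finset.univ \ C) π₁ {C}}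
                else {π₁ : Finset (Finset P) | IsPartition π₁ (Finset.univ \ C)}),
        ∀ D ∈ insert C π', D ≠ C → q w D < q w C := by
      intro π' hπ'
      have hp' : IsPartition π' (Finset.univ \ C) := mem_iteSet_isPartition hπ'
      have hpos : 0 < payoff w θ j₀ (insert C π') :=
        lt_of_le_of_lt (payoff_nonneg w hθ j₀ π) (hblk j₀ hj₀ π' hπ')
      obtain ⟨Cw, hCwmem, hjCw, hCwprop⟩ := winner_of_payoff_pos hpos
      have hCwC : Cw = C := by
        rcases Finset.mem_insert.mp hCwmem with h1 | h1
        · exact h1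
        · exact absurd ((Finset.mem_sdiff.mp (hp'.2.1 Cw h1 hjCw)).2) (fun hh => hh hj₀)
      exact hCwC ▸ hCwprop
    by_cases hq : q w C ≤ q w (Finset.univ \ C)
    · by_cases hS : (Finset.univ \ C : Finset P).Nonempty
      · exact no_always_winner w hθ ⟨j₀, hj₀⟩ hS hq hwin
      · rw [Finset.not_nonempty_iff_eq_empty] at hS
        have h1 : q w C = 0 := by rw [hS, q_empty] at hq; omega
        have h2 : q w Cs ≤ q w C :=
          q_mono w (fun x _ => (Finset.sdiff_eq_empty_iff_subset.mp hS) (Finset.mem_univ x))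
        have h3 : q w Csᶜ < q w Cs := hCsM.1
        omega
    · push_neg at hq
      have hCwin : Winning w C := by
        rw [Winning, Finset.compl_eq_univ_sdiff]; exact hq
      have hint : ∃ j, j ∈ C ∧ j ∈ Cs := by
        by_contra h
        push_neg at h
        have h1 : q w Cs ≤ q w (Finset.univ \ C) :=
          q_mono w (fun x hx =>
            Finset.mem_sdiff.mpr ⟨Finset.mem_univ x, fun hxC => h x hxC hx⟩)
        have h2 : q w C ≤ q w Csᶜ :=
          q_mono w (fun x hx => Finset.mem_compl.mpr (fun hxCs => h x hx hxCs))
        have h3 : q w Csᶜ < q w Cs := hCsM.1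
        omega
      obtain ⟨j, hjC, hjCs⟩ := hint
      obtain ⟨π', hπ'⟩ := iteSet_nonempty (Finset.univ \ C)
        (fun ρ => CStableRel w θ (Finset.univ \ C) ρ {C})
      have hlt := hblk j hjC π' hπ'
      have hCw := hwin π' hπ'
      rw [payoff_eq_of_winner w θ (Finset.mem_insert_self C π') hCw j, if_pos hjC] at hlt
      have hCsprop : ∀ D ∈ π, D ≠ Cs → q w D < q w Cs := fun D hD hne =>
        lt_of_le_of_lt (q_mono w (part_subset_compl hπ hCsπ hD hne)) hCsM.1
      rw [payoff_eq_of_winner w θ hCsπ hCsprop j, if_pos hjCs] at hlt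
      have hCpos : 0 < ∑ k ∈ C, θ k := Finset.sum_pos (fun i _ => hθ i) ⟨j, hjC⟩
      have hCspos : 0 < ∑ k ∈ Cs, θ k := Finset.sum_pos (fun i _ => hθ i) ⟨j, hjCs⟩
      have hθlt : ∑ k ∈ C, θ k < ∑ k ∈ Cs, θ k := by
        by_contra hge
        push_neg at hge
        have hh : θ j / ∑ k ∈ C, θ k ≤ θ j / ∑ k ∈ Cs, θ k :=
          div_le_div_of_nonneg_left (hθ j).le hCspos hge
        linarith
      obtain ⟨D, hDC, hDM⟩ := exists_mwc_subset C hCwin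
      have h4 := hCsmin D hDM
      have h5 : ∑ k ∈ D, θ k ≤ ∑ k ∈ C, θ k :=
        Finset.sum_le_sum_of_subset_of_nonneg hDC (fun i _ _ => (hθ i).le)
      linarith
end
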